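/- Let v be a C¹ vector field on a helical domain Ω ⊆ ℝ³ which is helical and divergence-free. Then its orthogonal part u = v − v_ξ ξ/|ξ|², where |ξ(x)|² = h² + x₁² + x₂², is a helical and divergence-free vector field on Ω. -/

import Mathlib

noncomputable section

open Real

/-- ℝ³ as functions `Fin 3 → ℝ`. -/
abbrev V3 := Fin 3 → ℝ

/-- Partial derivative `∂_{x_i} f` of a scalar function on ℝ³. -/
def pd3 (i : Fin 3) (f : V3 → ℝ) (x : V3) : ℝ := fderiv ℝ f x (Pi.single i 1)

/-- The helical transformation `H_θ(x) = Q_θ x + (0,0,hθ)`. -/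
def Hmap (h θ : ℝ) (x : V3) : V3 :=
  ![x 0 * Real.cos θ + x 1 * Real.sin θ,
    -(x 0) * Real.sin θ + x 1 * Real.cos θ,
    x 2 + h * θ]

/-- The rotation `Q_θ = diag(R_θ, 1)` acting on vectors of ℝ³. -/
def Qrot (θ : ℝ) (v : V3) : V3 :=
  ![v 0 * Real.cos θ + v 1 * Real.sin θ,
    -(v 0) * Real.sin θ + v 1 * Real.cos θ,
    v 2]

/-- The vector field `ξ(x) = (x₂, −x₁, h)`. -/
def xiVec (h : ℝ) (x : V3) : V3 := ![x 1, -(x 0), h]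

/-- `|ξ(x)|² = h² + x₁² + x₂²`. -/
def xiNormSq (h : ℝ) (x : V3) : ℝ := h ^ 2 + (x 0) ^ 2 + (x 1) ^ 2

/-- The helical swirl `v_ξ = v ⋅ ξ`. -/
def swirl (h : ℝ) (v : V3 → V3) (x : V3) : ℝ := ∑ i : Fin 3, v x i * xiVec h x i

/-- The orthogonal part `u = v − v_ξ ξ / |ξ|²` of a vector field `v`. -/
def orthPart (h : ℝ) (v : V3 → V3) (x : V3) : V3 :=
  fun i => v x i - swirl h v x * xiVec h x i / xiNormSq h x

/-! The rotation `Q_θ` is orthogonal, `ξ(H_θ x) = Q_θ ξ(x)` and `|ξ(H_θ x)| = |ξ(x)|`, so the swirl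
of a helical field is `H_θ`-invariant and the orthogonal part is again helical. The curve
`θ ↦ H_θ x` has velocity `ξ(x)` at `θ = 0`, so every `H_θ`-invariant function `f` satisfies
`ξ · ∇f = 0`; together with `div ξ = 0` this gives `div (f ξ) = 0` for `f = v_ξ / |ξ|²`, whence
`div u = div v = 0`. -/

open Finset

lemma xiNormSq_pos {h : ℝ} (hh : h ≠ 0) (x : V3) : 0 < xiNormSq h x := by
  unfold xiNormSq; positivity

lemma xiNormSq_Hmap (h θ : ℝ) (x : V3) : xiNormSq h (Hmap h θ x) = xiNormSq h x := by
  simp only [xiNormSq, Hmap, Matrix.cons_val_zero, Matrix.cons_val_one]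
  linear_combination ((x 0) ^ 2 + (x 1) ^ 2) * sin_sq_add_cos_sq θ

lemma xiVec_Hmap (h θ : ℝ) (x : V3) : xiVec h (Hmap h θ x) = Qrot θ (xiVec h x) := by
  ext i; fin_cases i <;> (simp [xiVec, Hmap, Qrot]; try ring)

lemma Qrot_dotProduct_Qrot (θ : ℝ) (a b : V3) : Qrot θ a ⬝ᵥ Qrot θ b = a ⬝ᵥ b := by
  simp only [dotProduct, Fin.sum_univ_three, Qrot, Matrix.cons_val_zero, Matrix.cons_val_one,
    Matrix.cons_val_two, Matrix.head_cons, Matrix.tail_cons]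
  linear_combination (a 0 * b 0 + a 1 * b 1) * sin_sq_add_cos_sq θ

lemma Qrot_sub_smul (θ c : ℝ) (a b : V3) : Qrot θ (a - c • b) = Qrot θ a - c • Qrot θ b := by
  ext i; fin_cases i <;> simp [Qrot] <;> ring

lemma swirl_eq_dotProduct (h : ℝ) (v : V3 → V3) (x : V3) : swirl h v x = v x ⬝ᵥ xiVec h x := rfl

lemma orthPart_eq (h : ℝ) (v : V3 → V3) (x : V3) :
    orthPart h v x = v x - (swirl h v x / xiNormSq h x) • xiVec h x := by
  ext i; simp only [orthPart, Pi.sub_apply, Pi.smul_apply, smul_eq_mul]; ring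

section Helical

variable {h : ℝ} {v : V3 → V3} {x : V3}

lemma swirl_Hmap (hhel : ∀ θ, v (Hmap h θ x) = Qrot θ (v x)) (θ : ℝ) :
    swirl h v (Hmap h θ x) = swirl h v x := by
  rw [swirl_eq_dotProduct, swirl_eq_dotProduct, hhel, xiVec_Hmap, Qrot_dotProduct_Qrot]

lemma orthPart_Hmap (hhel : ∀ θ, v (Hmap h θ x) = Qrot θ (v x)) (θ : ℝ) :
    orthPart h v (Hmap h θ x) = Qrot θ (orthPart h v x) := by
  rw [orthPart_eq, orthPart_eq, swirl_Hmap hhel, xiNormSq_Hmap, xiVec_Hmap, hhel, Qrot_sub_smul]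

end Helical

lemma Hmap_zero (h : ℝ) (x : V3) : Hmap h 0 x = x := by
  ext i; fin_cases i <;> simp [Hmap]

lemma hasDerivAt_Hmap (h : ℝ) (x : V3) : HasDerivAt (fun θ => Hmap h θ x) (xiVec h x) 0 := by
  rw [hasDerivAt_pi]
  intro i
  fin_cases i
  · simpa [Hmap, xiVec] using
      ((hasDerivAt_cos 0).const_mul (x 0)).fun_add ((hasDerivAt_sin 0).const_mul (x 1))
  · simpa [Hmap, xiVec] using
      ((hasDerivAt_sin 0).const_mul (-x 0)).fun_add ((hasDerivAt_cos 0).const_mul (x 1))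
  · simpa [Hmap, xiVec] using ((hasDerivAt_id (0 : ℝ)).const_mul h).const_add (x 2)

lemma fderiv_xiVec_eq_zero_of_Hmap_invariant {h : ℝ} {f : V3 → ℝ} {x : V3}
    (hf : DifferentiableAt ℝ f x) (hinv : ∀ θ, f (Hmap h θ x) = f x) :
    fderiv ℝ f x (xiVec h x) = 0 := by
  have hcomp : HasDerivAt (fun θ => f (Hmap h θ x)) (fderiv ℝ f x (xiVec h x)) 0 := by
    have hF : HasFDerivAt f (fderiv ℝ f x) (Hmap h 0 x) := by
      rw [Hmap_zero]; exact hf.hasFDerivAt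
    exact hF.comp_hasDerivAt 0 (hasDerivAt_Hmap h x)
  simp only [hinv] at hcomp
  exact hcomp.unique (hasDerivAt_const 0 _)

lemma sum_pd3_mul_eq_fderiv (f : V3 → ℝ) (x c : V3) : ∑ i, pd3 i f x * c i = fderiv ℝ f x c := by
  conv_rhs => rw [pi_eq_sum_univ' c]
  simp [pd3, mul_comm]

lemma differentiable_xiVec (h : ℝ) : Differentiable ℝ (xiVec h) := by
  rw [differentiable_pi]
  intro i; fin_cases i <;> simp [xiVec] <;> fun_prop

lemma differentiable_xiNormSq (h : ℝ) : Differentiable ℝ (xiNormSq h) := by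
  unfold xiNormSq; fun_prop

lemma differentiableAt_swirl {h : ℝ} {v : V3 → V3} {x : V3} (hv : DifferentiableAt ℝ v x) :
    DifferentiableAt ℝ (swirl h v) x := by
  have := differentiable_xiVec h x
  unfold swirl; fun_prop

lemma pd3_xiVec_apply_self (h : ℝ) (i : Fin 3) (x : V3) : pd3 i (fun y => xiVec h y i) x = 0 := by
  have hcoord (j : Fin 3) : fderiv ℝ (fun y : V3 => y j) x = ContinuousLinearMap.proj j :=
    (ContinuousLinearMap.proj (R := ℝ) (φ := fun _ : Fin 3 => ℝ) j).fderiv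
  fin_cases i <;> simp [pd3, xiVec, hcoord]

def divergence (w : V3 → V3) (x : V3) : ℝ := ∑ i, pd3 i (fun y => w y i) x

lemma divergence_sub {v w : V3 → V3} {x : V3} (hv : DifferentiableAt ℝ v x)
    (hw : DifferentiableAt ℝ w x) :
    divergence (fun y => v y - w y) x = divergence v x - divergence w x := by
  simp only [divergence, ← sum_sub_distrib, pd3, Pi.sub_apply]
  refine sum_congr rfl fun i _ => ?_
  rw [fderiv_fun_sub (differentiableAt_pi.1 hv i) (differentiableAt_pi.1 hw i)]
  rfl

lemma divergence_smul_xiVec {h : ℝ} {f : V3 → ℝ} {x : V3} (hf : DifferentiableAt ℝ f x) :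
    divergence (fun y => f y • xiVec h y) x = fderiv ℝ f x (xiVec h x) := by
  have hprod : ∀ i, pd3 i (fun y => f y * xiVec h y i) x = pd3 i f x * xiVec h x i := fun i => by
    have := pd3_xiVec_apply_self h i x
    simp only [pd3] at this ⊢
    rw [fderiv_fun_mul hf (differentiableAt_pi.1 (differentiable_xiVec h x) i)]
    simp [this, mul_comm]
  simp only [divergence, Pi.smul_apply, smul_eq_mul, hprod, sum_pd3_mul_eq_fderiv]

theorem orthPart_helical_divFree_general (h : ℝ) (hh : 0 < h) (Ω : Set V3) (hΩopen : IsOpen Ω)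
    (v : V3 → V3) (hv : ∀ i : Fin 3, ContDiffOn ℝ 1 (fun x => v x i) Ω)
    (hhel : ∀ θ : ℝ, ∀ x ∈ Ω, v (Hmap h θ x) = Qrot θ (v x))
    (hdiv : ∀ x ∈ Ω, ∑ i : Fin 3, pd3 i (fun y => v y i) x = 0) :
    (∀ θ : ℝ, ∀ x ∈ Ω, orthPart h v (Hmap h θ x) = Qrot θ (orthPart h v x)) ∧
      (∀ x ∈ Ω, ∑ i : Fin 3, pd3 i (fun y => orthPart h v y i) x = 0) := by
  refine ⟨fun θ x hx => orthPart_Hmap (fun θ => hhel θ x hx) θ, fun x hx => ?_⟩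
  have hvx : DifferentiableAt ℝ v x := differentiableAt_pi.2 fun i =>
    ((hv i).differentiableOn one_ne_zero).differentiableAt (hΩopen.mem_nhds hx)
  set f : V3 → ℝ := fun y => swirl h v y / xiNormSq h y
  have hf : DifferentiableAt ℝ f x := by
    simp only [f, div_eq_mul_inv]
    exact (differentiableAt_swirl hvx).mul
      ((differentiable_xiNormSq h x).inv (xiNormSq_pos hh.ne' x).ne')
  have hf_invariant : ∀ θ, f (Hmap h θ x) = f x := fun θ => by
    simp only [f, swirl_Hmap (fun θ => hhel θ x hx), xiNormSq_Hmap]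
  have horth : orthPart h v = fun y => v y - f y • xiVec h y := funext (orthPart_eq h v)
  change divergence (orthPart h v) x = 0
  rw [horth, divergence_sub hvx (hf.fun_smul (differentiable_xiVec h x)),
    divergence_smul_xiVec hf, fderiv_xiVec_eq_zero_of_Hmap_invariant hf hf_invariant, sub_zero]
  exact hdiv x hx

/-- The orthogonal part of a helical divergence-free C¹ vector field is helical
and divergence-free. -/
theorem orthPart_helical_divFree (h : ℝ) (hh : 0 < h) (Ω : Set V3) (hΩopen : IsOpen Ω)
    (hΩ : ∀ θ : ℝ, Hmap h θ '' Ω = Ω)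
    (v : V3 → V3) (hv : ∀ i : Fin 3, ContDiffOn ℝ 1 (fun x => v x i) Ω)
    (hhel : ∀ θ : ℝ, ∀ x ∈ Ω, v (Hmap h θ x) = Qrot θ (v x))
    (hdiv : ∀ x ∈ Ω, ∑ i : Fin 3, pd3 i (fun y => v y i) x = 0) :
    (∀ θ : ℝ, ∀ x ∈ Ω, orthPart h v (Hmap h θ x) = Qrot θ (orthPart h v x)) ∧
      (∀ x ∈ Ω, ∑ i : Fin 3, pd3 i (fun y => orthPart h v y i) x = 0) :=
  orthPart_helical_divFree_general h hh Ω hΩopen v hv hhel hdiv
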